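/- arXiv:2208.13342 — 2 statements merged into one kernel-verified Lean document; each statement's English description precedes it below -/
import Mathlib

section
/- For the system (x_1,x_2)⁺ = (x_2+u, -x_1) with constraints x ∈ [-1,1]², u ∈ [-1-x_2, 1-x_2], and stage cost ℓ(x,u) = u² + x_1⁴ - 0.5 x_1², the system is NOT dissipative with respect to the supply rate s(x,u) = ℓ(x,u) - ℓ(0,0) = ℓ(x,u): there is no bounded function λ : [-1,1]² → ℝ such that λ(f(x,u)) - λ(x) ≤ ℓ(x,u) for all feasible (x,u). -/
/-- The example system is NOT dissipative w.r.t. the supply rate ℓ(x,u) - ℓ(0,0):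
no bounded storage function satisfies the dissipation inequality on the feasible set. -/
theorem stmt8 (f : ℝ × ℝ → ℝ → ℝ × ℝ) (hf : ∀ p u, f p u = (p.2 + u, -p.1))
    (ℓ : ℝ × ℝ → ℝ → ℝ) (hℓ : ∀ p u, ℓ p u = u ^ 2 + p.1 ^ 4 - 0.5 * p.1 ^ 2) :
    ¬ ∃ (lam : ℝ × ℝ → ℝ) (C : ℝ),
        (∀ p ∈ Set.Icc (-1 : ℝ) 1 ×ˢ Set.Icc (-1 : ℝ) 1, |lam p| ≤ C) ∧
        (∀ p u, p ∈ Set.Icc (-1 : ℝ) 1 ×ˢ Set.Icc (-1 : ℝ) 1 →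
          u ∈ Set.Icc (-1 - p.2) (1 - p.2) →
          lam (f p u) - lam p ≤ ℓ p u) := by
  rintro ⟨lam, C, -, h⟩
  have h0 := h (0.5, 0) 0 (by constructor <;> constructor <;> norm_num)
    (by constructor <;> norm_num)
  have h1 := h (0, -0.5) 0 (by constructor <;> constructor <;> norm_num)
    (by constructor <;> norm_num)
  have h2 := h (-0.5, 0) 0 (by constructor <;> constructor <;> norm_num)
    (by constructor <;> norm_num)
  have h3 := h (0, 0.5) 0 (by constructor <;> constructor <;> norm_num)
    (by constructor <;> norm_num)
  rw [hf, hℓ] at h0 h1 h2 h3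
  norm_num at h0 h1 h2 h3
  linarith
end

section
/- Suppose for every x ∈ X_f and every θ ∈ Θ there exists θ⁺ ∈ Θ with λ(θ⁺, f(x,κ_f(x))) - λ(θ,x) ≤ ℓ(x,κ_f(x)) - ℓ(x^s,u^s) - ρ(x - x^s), and suppose f(x,κ_f(x)) ∈ X_f for x ∈ X_f with (x,κ_f(x)) ∈ Z. Then any feasible solution of the N-step constrained problem at time t-1 (satisfying dynamics, feasibility, dissipation inequalities at steps t-1,...,t+N-2, and terminal constraint x_{t+N-1} ∈ X_f) can be extended by one step using u = κ_f(x_{t+N-1}) and an appropriate θ-update to a feasible solution of the N-step problem at time t. Hence the feasible set of the problem is recursively nonempty along the closed loop. -/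
/-- Recursive feasibility: a feasible N-step solution at time t-1 can be extended by one
step using the terminal law κ_f and an appropriate θ-update to a feasible solution at
time t. -/
theorem stmt15 {X U P : Type*} [AddCommGroup X]
    (Z : Set (X × U)) (Θ : Set P) (Xf : Set X)
    (f : X → U → X) (κf : X → U) (lam : P → X → ℝ) (ℓ : X → U → ℝ)
    (ρ : X → ℝ) (hρ0 : ρ 0 = 0) (hρpos : ∀ z : X, z ≠ 0 → 0 < ρ z)
    (xs : X) (us : U) (hss : f xs us = xs)
    (N : ℕ) (hN : 1 ≤ N)
    (hterm : ∀ x ∈ Xf, ∀ θ ∈ Θ, ∃ θp ∈ Θ,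
      lam θp (f x (κf x)) - lam θ x ≤ ℓ x (κf x) - ℓ xs us - ρ (x - xs))
    (hinv : ∀ x ∈ Xf, f x (κf x) ∈ Xf ∧ (x, κf x) ∈ Z)
    (x : ℕ → X) (u : ℕ → U) (θ : ℕ → P)
    (hdyn : ∀ k < N, x (k + 1) = f (x k) (u k))
    (hfeas : ∀ k < N, (x k, u k) ∈ Z)
    (hθ : ∀ k ≤ N, θ k ∈ Θ)
    (hdiss : ∀ k < N, lam (θ (k + 1)) (x (k + 1)) - lam (θ k) (x k) + ρ (x k - xs)
      ≤ ℓ (x k) (u k) - ℓ xs us)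
    (hXf : x N ∈ Xf) :
    ∃ (x' : ℕ → X) (u' : ℕ → U) (θ' : ℕ → P),
      (∀ k < N, x' k = x (k + 1)) ∧ x' N = f (x N) (κf (x N)) ∧
      (∀ k < N - 1, u' k = u (k + 1)) ∧ u' (N - 1) = κf (x N) ∧
      (∀ k < N, θ' k = θ (k + 1)) ∧
      (∀ k < N, x' (k + 1) = f (x' k) (u' k)) ∧
      (∀ k < N, (x' k, u' k) ∈ Z) ∧
      (∀ k ≤ N, θ' k ∈ Θ) ∧
      (∀ k < N, lam (θ' (k + 1)) (x' (k + 1)) - lam (θ' k) (x' k) + ρ (x' k - xs)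
        ≤ ℓ (x' k) (u' k) - ℓ xs us) ∧
      x' N ∈ Xf := by

  obtain ⟨θp, hθp, hθpineq⟩ := hterm (x N) hXf (θ N) (hθ N le_rfl)
  refine ⟨fun k => if k < N then x (k+1) else f (x N) (κf (x N)),
          fun k => if k < N - 1 then u (k+1) else κf (x N),
          fun k => if k < N then θ (k+1) else θp, ?_, ?_, ?_, ?_, ?_, ?_, ?_, ?_, ?_, ?_⟩
  · intro k hk; simp [hk]
  · simp
  · intro k hk; simp [hk]
  · simp
  · intro k hk; simp [hk]
  · intro k hk
    rcases lt_or_ge k (N-1) with h | h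
    · have h1 : k + 1 < N := by omega
      simp only [hk, h1, h, if_pos]
      exact hdyn (k+1) (by omega)
    · have hk1 : k = N - 1 := by omega
      subst hk1
      have hN1 : N - 1 + 1 = N := by omega
      simp [hN1, hk]
  · intro k hk
    rcases lt_or_ge k (N-1) with h | h
    · simp only [hk, h, if_pos]
      exact hfeas (k+1) (by omega)
    · have hk1 : k = N - 1 := by omega
      subst hk1
      have hN1 : N - 1 + 1 = N := by omega
      simp only [hk, hN1, lt_irrefl, if_pos, if_neg (lt_irrefl _)]
      exact (hinv (x N) hXf).2
  · intro k hk
    rcases lt_or_ge k N with h | h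
    · simp only [h, if_pos]
      exact hθ (k+1) (by omega)
    · have : ¬ k < N := by omega
      simp [this, hθp]
  · intro k hk
    rcases lt_or_ge k (N-1) with h | h
    · have h1 : k + 1 < N := by simpa using Nat.add_lt_of_lt_sub h
      simp only [hk, h1, h, if_pos]
      rcases lt_or_ge k N with _ | _
      · exact hdiss (k+1) (by omega)
      · omega
    · have hk1 : k = N - 1 := by omega
      subst hk1
      have hN1 : N - 1 + 1 = N := by omega
      simp only [hk, hN1, if_pos, if_neg (lt_irrefl _)]
      linarith [hθpineq]
  · simp [(hinv (x N) hXf).1]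
end
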